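/- Let σ=(Σ_i)_{i∈[k]} be a trace alphabet, κ_ω the capacity function with κ_ω(i) = ω for all i ∈ [k], and A, B nondeterministic Büchi automata over Σ. If there exists a continuous, trace-preserving function f : ARun(A) → ARun(B), then A ⊑^{κ_ω}_σ B. -/

import Mathlib

open Classical

noncomputable section

namespace MultiBuffer

/-! ### Nondeterministic Büchi automata -/

/-- A nondeterministic Büchi automaton over the alphabet `α`. -/
structure NBA (α : Type) : Type 1 where
  Q : Type
  finQ : Fintype Q
  init : Q
  δ : Q → α → Set Q
  F : Set Q

variable {α P Q : Type} {k : ℕ}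

/-- `r` is (the state sequence of) a run of `A` on the infinite word `w`. -/
def IsRun (A : NBA α) (w : ℕ → α) (r : ℕ → A.Q) : Prop :=
  r 0 = A.init ∧ ∀ n, r (n + 1) ∈ A.δ (r n) (w n)

/-- The state sequence `r` visits accepting states infinitely often. -/
def AcceptingStates (A : NBA α) (r : ℕ → A.Q) : Prop :=
  {n | r n ∈ A.F}.Infinite

/-- The ω-language of a Büchi automaton. -/
def Lang (A : NBA α) : Set (ℕ → α) :=
  {w | ∃ r, IsRun A w r ∧ AcceptingStates A r}

/-! ### Finite or infinite words, projections and trace equivalence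

A finite or infinite word over `α` is represented as a function `ℕ → Option α`
which is `none` from some point on (if finite); infinite words embed via `ofInf`. -/

/-- The infinite word `u` viewed as an element of `Σ^∞`. -/
def ofInf (u : ℕ → α) : ℕ → Option α := fun n => some (u n)

/-- A function `ℕ → Option α` represents a finite or infinite word if after the
first `none` everything is `none`. -/
def Stable (w : ℕ → Option α) : Prop := ∀ n, w n = none → w (n + 1) = none

/-- The number of `i < j` satisfying `p`. -/
def countBelow (p : ℕ → Prop) (j : ℕ) : ℕ := {i | i < j ∧ p i}.ncard

/-- Position `j` of the word `w` carries a letter belonging to `S`. -/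
def InS (S : Set α) (w : ℕ → Option α) (j : ℕ) : Prop := ∃ a ∈ S, w j = some a

/-- The projection `π_S(w)` of the word `w` to the subalphabet `S`: the word obtained
from `w` by deleting all letters not in `S`. -/
def proj (S : Set α) (w : ℕ → Option α) (n : ℕ) : Option α :=
  if h : ∃ j, InS S w j ∧ countBelow (InS S w) j = n then w h.choose else none

/-- Trace equivalence of (finite or infinite) words w.r.t. the trace alphabet
`σ = (Σ_i)_{i ∈ [k]}` : all projections coincide. -/
def TraceEquiv (σ : Fin k → Set α) (u v : ℕ → Option α) : Prop :=
  ∀ i, proj (σ i) u = proj (σ i) v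

/-- The trace closure of a language of infinite words. -/
def closure (σ : Fin k → Set α) (L : Set (ℕ → α)) : Set (ℕ → α) :=
  {v | ∃ u ∈ L, TraceEquiv σ (ofInf u) (ofInf v)}

/-! ### The multi-buffer game -/

/-- A configuration of the multi-buffer game: a state of Spoiler's automaton,
the contents of the `k` buffers, and a state of Duplicator's automaton. -/
structure Conf (α P Q : Type) (k : ℕ) where
  p : P
  bufs : Fin k → List α
  q : Q

/-- Appending the letter `a` to the back of every buffer `i` with `a ∈ σ i`. -/
def push (σ : Fin k → Set α) (bufs : Fin k → List α) (a : α) : Fin k → List α :=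
  fun i => if a ∈ σ i then bufs i ++ [a] else bufs i

/-- Popping the letter `b` from the front of every buffer `i` with `b ∈ σ i`. -/
def pop (σ : Fin k → Set α) (bufs : Fin k → List α) (b : α) : Fin k → List α :=
  fun i => if b ∈ σ i then (bufs i).tail else bufs i

/-- Effect of a Spoiler move `m = (a, p')` on a configuration. -/
def spApply (σ : Fin k → Set α) (c : Conf α P Q k) (m : α × P) : Conf α P Q k :=
  ⟨m.2, push σ c.bufs m.1, c.q⟩

/-- Effect of a (possibly empty) Duplicator move `d = (b₁,q₁)...(b_n,q_n)`. -/
def dupApply (σ : Fin k → Set α) (c : Conf α P Q k) (d : List (α × Q)) : Conf α P Q k :=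
  ⟨c.p, d.foldl (fun bs m => pop σ bs m.1) c.bufs, ((d.getLast?).map Prod.snd).getD c.q⟩

/-- Legality of a Spoiler move: it follows a transition of his automaton. -/
def SpLegal (δA : P → α → Set P) (c : Conf α P Q k) (m : α × P) : Prop :=
  m.2 ∈ δA c.p m.1

/-- Legality of a Duplicator move from a configuration: the moves form a run of her
automaton and each letter is removed from the front of the corresponding buffers. -/
def DupLegal (σ : Fin k → Set α) (δB : Q → α → Set Q) :
    Conf α P Q k → List (α × Q) → Prop
  | _, [] => True
  | c, m :: rest =>
      m.2 ∈ δB c.q m.1 ∧ (∀ i, m.1 ∈ σ i → (c.bufs i).head? = some m.1) ∧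
      DupLegal σ δB ⟨c.p, pop σ c.bufs m.1, m.2⟩ rest

/-- The capacity constraints (checked after a full round). -/
def CapOk (κ : Fin k → ℕ∞) (c : Conf α P Q k) : Prop :=
  ∀ i, ((c.bufs i).length : ℕ∞) ≤ κ i

/-- The list of the first `n` values of the sequence `s`. -/
def hist {β : Type} (s : ℕ → β) (n : ℕ) : List β := List.ofFn (fun i : Fin n => s i)

/-- The configuration of the play after `n` full rounds, when Spoiler plays the
sequence `s` of moves and Duplicator follows the strategy `θ` (which maps the
history of Spoiler moves, including the current one, to her response). -/
def playConf (σ : Fin k → Set α) (θ : List (α × P) → List (α × Q))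
    (c0 : Conf α P Q k) (s : ℕ → α × P) : ℕ → Conf α P Q k
  | 0 => c0
  | n + 1 => dupApply σ (spApply σ (playConf σ θ c0 s n) (s n)) (θ (hist s (n + 1)))

/-- Duplicator's response in round `n`. -/
def resp (θ : List (α × P) → List (α × Q)) (s : ℕ → α × P) (n : ℕ) : List (α × Q) :=
  θ (hist s (n + 1))

/-- Spoiler's move in round `n` is legal. -/
def SpLegalAt (σ : Fin k → Set α) (δA : P → α → Set P) (θ : List (α × P) → List (α × Q))
    (c0 : Conf α P Q k) (s : ℕ → α × P) (n : ℕ) : Prop :=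
  SpLegal δA (playConf σ θ c0 s n) (s n)

/-- Duplicator's response in round `n` is legal and the capacities are respected
after the round. -/
def DupOkAt (σ : Fin k → Set α) (κ : Fin k → ℕ∞) (δB : Q → α → Set Q)
    (θ : List (α × P) → List (α × Q)) (c0 : Conf α P Q k) (s : ℕ → α × P) (n : ℕ) : Prop :=
  DupLegal σ δB (spApply σ (playConf σ θ c0 s n) (s n)) (resp θ s n) ∧
  CapOk κ (playConf σ θ c0 s (n + 1))

/-- The number of occurrences of the letter `a` in Spoiler's word. -/
def spOcc (s : ℕ → α × P) (a : α) : ℕ∞ := {n | (s n).1 = a}.encard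

/-- The number of occurrences of the letter `a` in Duplicator's word. -/
def dupOcc (θ : List (α × P) → List (α × Q)) (s : ℕ → α × P) (a : α) : ℕ∞ :=
  {x : ℕ × ℕ | ∃ m, (resp θ s x.1)[x.2]? = some m ∧ m.1 = a}.encard

/-- Spoiler's run is accepting. -/
def SpAccept (FA : Set P) (s : ℕ → α × P) : Prop := {n | (s n).2 ∈ FA}.Infinite

/-- Duplicator's run is (infinite and) accepting. -/
def DupAccept (FB : Set Q) (θ : List (α × P) → List (α × Q)) (s : ℕ → α × P) : Prop :=
  {n | ∃ m ∈ resp θ s n, m.2 ∈ FB}.Infinite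

/-- Duplicator has a winning strategy in the multi-buffer game (with buffer alphabets
`σ`, capacities `κ`) played on the transition structures `δA`, `δB` with acceptance
sets `FA`, `FB`, starting from the configuration `c0`: she always has legal responses
(as long as Spoiler has played legally), and if the resulting infinite play carries an
accepting run of Spoiler then her own run is infinite and accepting and every letter
occurs equally often in both words (i.e. every letter put into a buffer is eventually
read). Finite plays in which a player is stuck are lost by that player. -/
def DupWinsFrom (σ : Fin k → Set α) (κ : Fin k → ℕ∞) (δA : P → α → Set P)
    (δB : Q → α → Set Q) (FA : Set P) (FB : Set Q) (c0 : Conf α P Q k) : Prop :=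
  ∃ θ : List (α × P) → List (α × Q),
    ∀ s : ℕ → α × P,
      (∀ n, (∀ m ≤ n, SpLegalAt σ δA θ c0 s m) → DupOkAt σ κ δB θ c0 s n) ∧
      ((∀ n, SpLegalAt σ δA θ c0 s n) → SpAccept FA s →
        DupAccept FB θ s ∧ ∀ a : α, spOcc s a = dupOcc θ s a)

/-- The multi-buffer simulation `A ⊑^κ_σ B`. -/
def Simu (σ : Fin k → Set α) (κ : Fin k → ℕ∞) (A B : NBA α) : Prop :=
  DupWinsFrom σ κ A.δ B.δ A.F B.F ⟨A.init, fun _ => [], B.init⟩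


/-! ### Accepting runs, the metric on runs, continuity and trace preservation -/

variable {α : Type}

/-- The set of accepting runs of an NBA, as a type: a run `q₀ a₀ q₁ a₁ ⋯` is given
by its state sequence and its word, and it must start in the initial state, follow
the transition function, and visit `F` infinitely often. -/
def ARun (A : NBA α) : Type :=
  {x : (ℕ → A.Q) × (ℕ → α) //
    x.1 0 = A.init ∧ (∀ n, x.1 (n + 1) ∈ A.δ (x.1 n) (x.2 n)) ∧ {n | x.1 n ∈ A.F}.Infinite}

/-- An accepting run viewed as the infinite sequence `q₀ a₀ q₁ a₁ ⋯ ∈ (Q ∪ Σ)^ω`. -/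
def seqOf {A : NBA α} (ρ : ARun A) : ℕ → A.Q ⊕ α :=
  fun n => if n % 2 = 0 then Sum.inl (ρ.val.1 (n / 2)) else Sum.inr (ρ.val.2 (n / 2))

/-- Continuity of `f : ARun A → ARun B` with respect to the metric
`d(x,y) = inf {2^{-i} ∣ x_j = y_j for all j < i}` on the sequences in `(Q ∪ Σ)^ω`:
for every run `ρ` and every required output precision `2^{-n}` there is an input
precision `2^{-m}` such that runs `2^{-m}`-close to `ρ` are mapped to runs
`2^{-n}`-close to `f ρ`. -/
def ContinuousRF {A B : NBA α} (f : ARun A → ARun B) : Prop :=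
  ∀ (ρ : ARun A) (n : ℕ), ∃ m : ℕ, ∀ ρ' : ARun A,
    (∀ j < m, seqOf ρ' j = seqOf ρ j) → ∀ j < n, seqOf (f ρ') j = seqOf (f ρ) j

/-- `f : ARun A → ARun B` is trace-preserving: the word of `f ρ` is trace
equivalent to the word of `ρ`. -/
def TracePres {k : ℕ} (σ : Fin k → Set α) {A B : NBA α} (f : ARun A → ARun B) : Prop :=
  ∀ ρ : ARun A, TraceEquiv σ (ofInf ρ.val.2) (ofInf (f ρ).val.2)

/-- The capacity function making all `k` buffers unbounded. -/
def kapAllOmega (k : ℕ) : Fin k → ℕ∞ := fun _ => ⊤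

/-! Duplicator plays `f` lazily. After each Spoiler move she extends her run by those moves of
`f ρ` that are already the same for every accepting run `ρ` extending Spoiler's history and
whose letters Spoiler has already put into the buffers. If Spoiler's run `ρ` is accepting,
continuity of `f` and trace preservation make this committed prefix of `f ρ` grow without
bound, so Duplicator's run is exactly `f ρ`: accepting, and trace equivalent to `ρ`, hence
with the same number of occurrences of each letter. -/

open Filter

lemma hist_eq_map_range {β : Type} (s : ℕ → β) (n : ℕ) : hist s n = (List.range n).map s := by
  apply List.ext_getElem <;> simp [hist]

@[simp] lemma length_hist {β : Type} (s : ℕ → β) (n : ℕ) : (hist s n).length = n := by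
  simp [hist]

lemma hist_succ {β : Type} (s : ℕ → β) (n : ℕ) : hist s (n + 1) = hist s n ++ [s n] := by
  simp [hist_eq_map_range, List.range_succ]

lemma map_hist {β γ : Type} (g : β → γ) (s : ℕ → β) (n : ℕ) :
    (hist s n).map g = hist (g ∘ s) n := by
  simp [hist_eq_map_range]

lemma take_hist {β : Type} (s : ℕ → β) {m n : ℕ} (h : m ≤ n) :
    (hist s n).take m = hist s m := by
  simp [hist_eq_map_range, ← List.map_take, List.take_range, min_eq_left h]

lemma drop_hist {β : Type} (s : ℕ → β) (m n : ℕ) :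
    (hist s n).drop m = (List.range' m (n - m)).map s := by
  rw [hist_eq_map_range, ← List.map_drop, List.range_eq_range', List.drop_range']
  simp

lemma hist_eq_append_drop {β : Type} (s : ℕ → β) {m n : ℕ} (h : m ≤ n) :
    hist s n = hist s m ++ (hist s n).drop m := by
  rw [← take_hist s h, List.take_append_drop]

lemma hist_prefix_hist {β : Type} (s : ℕ → β) {m n : ℕ} (h : m ≤ n) : hist s m <+: hist s n := by
  rw [← take_hist s h]
  exact List.take_prefix _ _

lemma hist_eq_hist_iff {β : Type} {s s' : ℕ → β} {n : ℕ} :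
    hist s n = hist s' n ↔ ∀ j < n, s j = s' j := by
  simp only [hist, List.ofFn_inj, funext_iff, Fin.forall_iff]

lemma countBelow_eq_length_filter (p : ℕ → Prop) (j : ℕ) :
    countBelow p j = ((List.range j).filter p).length := by
  rw [countBelow, ← List.toFinset_card_of_nodup (List.nodup_range.filter _), ← Set.ncard_coe_finset]
  congr 1
  ext i
  simp

lemma getElem?_filter_range_countBelow {p : ℕ → Prop} {j n : ℕ} (hjn : j < n) (hj : p j) :
    ((List.range n).filter p)[countBelow p j]? = some j := by
  obtain ⟨m, rfl⟩ : ∃ m, n = (j + 1) + m := ⟨n - (j + 1), by omega⟩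
  rw [List.range_add, List.range_succ, List.filter_append, List.filter_append,
    List.append_assoc, countBelow_eq_length_filter, List.getElem?_append_right le_rfl]
  simp [hj]

lemma countBelow_injOn (p : ℕ → Prop) : Set.InjOn (countBelow p) {j | p j} := by
  intro j (hj : p j) j' (hj' : p j') h
  have h₁ := getElem?_filter_range_countBelow (n := max j j' + 1) (by omega) hj
  have h₂ := getElem?_filter_range_countBelow (n := max j j' + 1) (by omega) hj'
  rw [h, h₂] at h₁
  exact (Option.some_injective _ h₁).symm

lemma getElem?_filter_range_eq_some_iff {p : ℕ → Prop} {n t j : ℕ} :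
    ((List.range n).filter p)[t]? = some j ↔ j < n ∧ p j ∧ countBelow p j = t := by
  constructor
  · intro h
    have hmem : j < n ∧ p j := by simpa using List.mem_of_getElem? h
    refine ⟨hmem.1, hmem.2, ?_⟩
    have ht : t < ((List.range n).filter p).length := (List.getElem?_eq_some_iff.1 h).1
    rw [← getElem?_filter_range_countBelow hmem.1 hmem.2] at h
    exact ((List.getElem?_inj ht (List.nodup_range.filter _)).1 h).symm
  · rintro ⟨hjn, hj, rfl⟩
    exact getElem?_filter_range_countBelow hjn hj

lemma getElem?_filter_hist_eq_some_iff (S : Set α) (w : ℕ → α) {n t : ℕ} {a : α} :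
    ((hist w n).filter (· ∈ S))[t]? = some a ↔
      ∃ j < n, w j ∈ S ∧ countBelow (fun i => w i ∈ S) j = t ∧ w j = a := by
  simp only [hist_eq_map_range, List.filter_map, List.getElem?_map, Option.map_eq_some_iff]
  constructor
  · rintro ⟨j, hj, rfl⟩
    obtain ⟨hjn, hjS, hjt⟩ := getElem?_filter_range_eq_some_iff.1 hj
    exact ⟨j, hjn, hjS, hjt, rfl⟩
  · rintro ⟨j, hjn, hjS, hjt, rfl⟩
    exact ⟨j, getElem?_filter_range_eq_some_iff.2 ⟨hjn, hjS, hjt⟩, rfl⟩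

lemma proj_ofInf_eq_some_iff (S : Set α) (w : ℕ → α) {t : ℕ} {a : α} :
    proj S (ofInf w) t = some a ↔
      ∃ j, w j ∈ S ∧ countBelow (fun i => w i ∈ S) j = t ∧ w j = a := by
  have hInS : InS S (ofInf w) = fun j => w j ∈ S := by
    ext j
    simp [InS, ofInf]
  rw [proj, hInS]
  split_ifs with h
  · have hc := h.choose_spec
    refine ⟨fun ha => ⟨h.choose, hc.1, hc.2, Option.some_injective _ ha⟩, ?_⟩
    rintro ⟨j, hjS, hjt, rfl⟩
    rw [countBelow_injOn _ hc.1 hjS (hc.2.trans hjt.symm)]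
    rfl
  · simp only [false_iff, not_exists, not_and]
    exact fun j hjS hjt _ => h ⟨j, hjS, hjt⟩

lemma eventually_filter_hist_prefix (S : Set α) {u v : ℕ → α}
    (h : proj S (ofInf u) = proj S (ofInf v)) (d : ℕ) :
    ∀ᶠ n in atTop, (hist v d).filter (· ∈ S) <+: (hist u n).filter (· ∈ S) := by
  set L := (hist v d).filter (· ∈ S)
  have hL : ∀ t < L.length, ∀ᶠ n in atTop,
      ((hist u n).filter (· ∈ S))[t]? = L[t]? := by
    intro t ht
    obtain ⟨j, -, hj⟩ := (getElem?_filter_hist_eq_some_iff S v).1 (List.getElem?_eq_getElem ht)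
    obtain ⟨j', hj'⟩ := (proj_ofInf_eq_some_iff S u).1 (h ▸ (proj_ofInf_eq_some_iff S v).2 ⟨j, hj⟩)
    filter_upwards [eventually_gt_atTop j'] with n hn
    rw [List.getElem?_eq_getElem ht]
    exact (getElem?_filter_hist_eq_some_iff S u).2 ⟨j', hn, hj'⟩
  filter_upwards [(eventually_all_finset (Finset.range L.length)).2
    fun t ht => hL t (Finset.mem_range.1 ht)] with n hn
  exact List.prefix_iff_getElem?.2 fun t ht =>
    (hn t (Finset.mem_range.2 ht)).trans (List.getElem?_eq_getElem ht)

lemma encard_setOf_eq_encard_proj (S : Set α) (w : ℕ → α) {a : α} (ha : a ∈ S) :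
    {n | w n = a}.encard = {t | proj S (ofInf w) t = some a}.encard := by
  have himage : countBelow (fun i => w i ∈ S) '' {n | w n = a}
      = {t | proj S (ofInf w) t = some a} := by
    ext t
    simp only [Set.mem_image, Set.mem_ofPred_eq, proj_ofInf_eq_some_iff]
    exact ⟨fun ⟨j, hj, hjt⟩ => ⟨j, hj ▸ ha, hjt, hj⟩, fun ⟨j, _, hjt, hj⟩ => ⟨j, hj, hjt⟩⟩
  have hinj : Set.InjOn (countBelow fun i => w i ∈ S) {n | w n = a} :=
    (countBelow_injOn _).mono fun n (hn : w n = a) => show w n ∈ S from hn ▸ ha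
  rw [← himage, hinj.encard_image]

lemma encard_setOf_eq_of_proj_eq (S : Set α) {u v : ℕ → α}
    (h : proj S (ofInf u) = proj S (ofInf v)) {a : α} (ha : a ∈ S) :
    {n | u n = a}.encard = {n | v n = a}.encard := by
  rw [encard_setOf_eq_encard_proj S u ha, encard_setOf_eq_encard_proj S v ha, h]

section Blocks

variable {D : ℕ → ℕ}

lemma exists_mem_block (h0 : D 0 = 0) (hunb : Tendsto D .atTop .atTop)
    (d : ℕ) : ∃ n, D n ≤ d ∧ d < D (n + 1) := by
  have hex : ∃ n, d < D n := (hunb.eventually_gt_atTop d).exists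
  have hpos : Nat.find hex ≠ 0 := fun h => by simpa [h, h0] using Nat.find_spec hex
  refine ⟨Nat.find hex - 1, not_lt.1 (Nat.find_min hex (by omega)), ?_⟩
  rw [Nat.sub_add_cancel (Nat.pos_of_ne_zero hpos)]
  exact Nat.find_spec hex

lemma encard_blocks (hD : Monotone D) (h0 : D 0 = 0) (hunb : Tendsto D .atTop .atTop)
    (p : ℕ → Prop) :
    {x : ℕ × ℕ | x.2 < D (x.1 + 1) - D x.1 ∧ p (D x.1 + x.2)}.encard = {d | p d}.encard := by
  have hinj : Set.InjOn (fun x : ℕ × ℕ => D x.1 + x.2)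
      {x | x.2 < D (x.1 + 1) - D x.1 ∧ p (D x.1 + x.2)} := by
    have hsep : ∀ n n' j j', n < n' → j < D (n + 1) - D n → D n + j < D n' + j' :=
      fun n n' _ _ h _ => by have := hD (show n + 1 ≤ n' by omega); omega
    rintro ⟨n, j⟩ ⟨hj, -⟩ ⟨n', j'⟩ ⟨hj', -⟩ h
    simp only at h hj hj'
    rcases lt_trichotomy n n' with hn | rfl | hn
    · exact absurd h (hsep n n' j j' hn hj).ne
    · simp only [Prod.mk.injEq, true_and]
      omega
    · exact absurd h (hsep n' n j' j hn hj').ne'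
  have himage : (fun x : ℕ × ℕ => D x.1 + x.2) ''
      {x | x.2 < D (x.1 + 1) - D x.1 ∧ p (D x.1 + x.2)} = {d | p d} := by
    ext d
    refine ⟨fun ⟨x, ⟨_, hx⟩, hxd⟩ => hxd ▸ hx, fun hd => ?_⟩
    obtain ⟨n, h1, h2⟩ := exists_mem_block h0 hunb d
    refine ⟨(n, d - D n), ⟨by simp only; omega, ?_⟩, by simp only; omega⟩
    show p (D n + (d - D n))
    rwa [Nat.add_sub_cancel' h1]
  rw [← himage, hinj.encard_image]

lemma infinite_setOf_block_hits (hD : Monotone D) (h0 : D 0 = 0)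
    (hunb : Tendsto D .atTop .atTop) {p : ℕ → Prop} (hp : {t | p t}.Infinite) :
    {n | ∃ t, D n ≤ t ∧ t < D (n + 1) ∧ p (t + 1)}.Infinite := by
  refine Set.infinite_of_forall_exists_gt fun n₀ => ?_
  obtain ⟨t, ht, hlt⟩ := hp.exists_gt (D (n₀ + 1))
  obtain ⟨n, h1, h2⟩ := exists_mem_block h0 hunb (t - 1)
  refine ⟨n, ⟨t - 1, h1, h2, by rwa [Nat.sub_add_cancel (by omega)]⟩, ?_⟩
  by_contra! hn
  have := hD (show n + 1 ≤ n₀ + 1 by omega)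
  omega

end Blocks

lemma push_apply (σ : Fin k → Set α) (bufs : Fin k → List α) (a : α) (i : Fin k) :
    push σ bufs a i = bufs i ++ [a].filter (· ∈ σ i) := by
  by_cases h : a ∈ σ i <;> simp [push, h]

lemma filter_hist_succ_of_eq_append (σ : Fin k → Set α) {s : ℕ → α × P} {n : ℕ}
    {bufs : Fin k → List α} {L : List α} {i : Fin k}
    (h : ((hist s n).map Prod.fst).filter (· ∈ σ i) = L ++ bufs i) :
    ((hist s (n + 1)).map Prod.fst).filter (· ∈ σ i) = L ++ push σ bufs (s n).1 i := by
  simp [hist_succ, h, push_apply]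

lemma foldl_pop_apply (σ : Fin k → Set α) (l : List (α × Q)) (bufs : Fin k → List α)
    (i : Fin k) :
    l.foldl (fun bs m => pop σ bs m.1) bufs i
      = (bufs i).drop ((l.map Prod.fst).filter (· ∈ σ i)).length := by
  induction l generalizing bufs with
  | nil => simp
  | cons m l ih =>
    rw [List.foldl_cons, ih]
    by_cases h : m.1 ∈ σ i
    · simp [pop, h, ← List.drop_one, List.drop_drop, add_comm]
    · simp [pop, h]

lemma dupLegal_range' (σ : Fin k → Set α) {δ : Q → α → Set Q} {w : ℕ → α} {r : ℕ → Q}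
    (hrun : ∀ j, r (j + 1) ∈ δ (r j) (w j)) (p : P) (len t : ℕ) (bufs : Fin k → List α)
    (hbufs : ∀ i, ((List.range' t len).map w).filter (· ∈ σ i) <+: bufs i) :
    DupLegal σ δ ⟨p, bufs, r t⟩ ((List.range' t len).map fun j => (w j, r (j + 1))) := by
  induction len generalizing t bufs with
  | zero => trivial
  | succ len ih =>
    simp only [List.range'_succ, List.map_cons] at hbufs ⊢
    refine ⟨hrun t, fun i hi => ?_, ih (t + 1) _ fun i => ?_⟩
    · obtain ⟨rest, hrest⟩ := hbufs i
      rw [List.filter_cons_of_pos (by simpa using hi)] at hrest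
      show (bufs i).head? = some (w t)
      rw [← hrest]
      rfl
    · by_cases hi : w t ∈ σ i
      · obtain ⟨rest, hrest⟩ := hbufs i
        rw [List.filter_cons_of_pos (by simpa using hi)] at hrest
        simp only [pop, if_pos hi, ← hrest, List.cons_append, List.tail_cons]
        exact List.prefix_append _ _
      · simpa [pop, hi] using hbufs i

section Strategy

variable {A B : NBA α}

def ARun.move (ρ : ARun A) (j : ℕ) : α × A.Q := (ρ.val.2 j, ρ.val.1 (j + 1))

lemma map_fst_hist_move (ρ : ARun A) (n : ℕ) : (hist ρ.move n).map Prod.fst = hist ρ.val.2 n :=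
  map_hist _ _ _

lemma seqOf_two_mul (ρ : ARun A) (j : ℕ) : seqOf ρ (2 * j) = .inl (ρ.val.1 j) := by
  simp [seqOf]

lemma seqOf_two_mul_add_one (ρ : ARun A) (j : ℕ) : seqOf ρ (2 * j + 1) = .inr (ρ.val.2 j) := by
  simp [seqOf, Nat.add_mod, Nat.add_div]

lemma seqOf_eq_of_hist_move_eq {ρ ρ' : ARun A} {n : ℕ} (h : hist ρ.move n = hist ρ'.move n) :
    ∀ j < 2 * n + 1, seqOf ρ j = seqOf ρ' j := by
  rw [hist_eq_hist_iff] at h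
  intro j hj
  obtain ⟨q, rfl | rfl⟩ := Nat.even_or_odd' j
  · rw [seqOf_two_mul, seqOf_two_mul]
    rcases q with _ | q
    · rw [ρ.2.1, ρ'.2.1]
    · exact congrArg (Sum.inl ·.2) (h q (by omega))
  · rw [seqOf_two_mul_add_one, seqOf_two_mul_add_one]
    exact congrArg (Sum.inr ·.1) (h q (by omega))

lemma hist_move_eq_of_seqOf_eq {ρ ρ' : ARun A} {n : ℕ}
    (h : ∀ j < 2 * n + 1, seqOf ρ j = seqOf ρ' j) : hist ρ.move n = hist ρ'.move n := by
  refine hist_eq_hist_iff.2 fun j hj => Prod.ext ?_ ?_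
  · simpa [ARun.move, seqOf_two_mul_add_one] using h (2 * j + 1) (by omega)
  · simpa [ARun.move, seqOf_two_mul] using h (2 * (j + 1)) (by omega)

lemma ContinuousRF.exists_hist_move_eq {f : ARun A → ARun B} (hf : ContinuousRF f)
    (ρ : ARun A) (d : ℕ) :
    ∃ N, ∀ ρ', hist ρ'.move N = hist ρ.move N → hist (f ρ').move d = hist (f ρ).move d := by
  obtain ⟨m, hm⟩ := hf ρ (2 * d + 1)
  exact ⟨m, fun ρ' h => hist_move_eq_of_seqOf_eq
    (hm ρ' fun j hj => seqOf_eq_of_hist_move_eq h j (by omega))⟩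

def runsExtending (h : List (α × A.Q)) : Set (ARun A) := {ρ | hist ρ.move h.length = h}

lemma mem_runsExtending_hist {ρ : ARun A} {s : ℕ → α × A.Q} {n : ℕ} :
    ρ ∈ runsExtending (hist s n) ↔ hist ρ.move n = hist s n := by
  simp [runsExtending]

lemma runsExtending_anti {h h' : List (α × A.Q)} (hp : h <+: h') :
    runsExtending h' ⊆ runsExtending h := by
  intro ρ (hρ : hist ρ.move h'.length = h')
  show hist ρ.move h.length = h
  rw [← take_hist _ hp.length_le, hρ, ← List.prefix_iff_eq_take.1 hp]

variable (σ : Fin k → Set α) (f : ARun A → ARun B)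

def CanCommit (h : List (α × A.Q)) (d : ℕ) : Prop :=
  (∀ ρ ∈ runsExtending h, ∀ ρ' ∈ runsExtending h, hist (f ρ).move d = hist (f ρ').move d) ∧
  ∀ ρ ∈ runsExtending h, ∀ i,
    (hist (f ρ).val.2 d).filter (· ∈ σ i) <+: (h.map Prod.fst).filter (· ∈ σ i)

def commitLength (h : List (α × A.Q)) : ℕ := Nat.findGreatest (CanCommit σ f h) h.length

def commitStrategy (h : List (α × A.Q)) : List (α × B.Q) :=
  if hne : (runsExtending h).Nonempty then
    (hist (f hne.some).move (commitLength σ f h)).drop (commitLength σ f h.dropLast)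
  else []

variable {σ f}

lemma canCommit_zero (h : List (α × A.Q)) : CanCommit σ f h 0 :=
  ⟨fun _ _ _ _ => rfl, fun _ _ _ => by simp [hist]⟩

lemma CanCommit.of_prefix {h h' : List (α × A.Q)} {d : ℕ} (hp : h <+: h')
    (hc : CanCommit σ f h d) : CanCommit σ f h' d :=
  ⟨fun ρ hρ ρ' hρ' => hc.1 ρ (runsExtending_anti hp hρ) ρ' (runsExtending_anti hp hρ'),
    fun ρ hρ i => (hc.2 ρ (runsExtending_anti hp hρ) i).trans ((hp.map Prod.fst).filter _)⟩

lemma canCommit_commitLength (h : List (α × A.Q)) : CanCommit σ f h (commitLength σ f h) :=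
  Nat.findGreatest_spec (Nat.zero_le _) (canCommit_zero h)

lemma commitLength_mono {h h' : List (α × A.Q)} (hp : h <+: h') :
    commitLength σ f h ≤ commitLength σ f h' :=
  Nat.le_findGreatest ((Nat.findGreatest_le _).trans hp.length_le)
    ((canCommit_commitLength h).of_prefix hp)

lemma commitStrategy_eq {h : List (α × A.Q)} {ρ : ARun A} (hρ : ρ ∈ runsExtending h) :
    commitStrategy σ f h
      = (hist (f ρ).move (commitLength σ f h)).drop (commitLength σ f h.dropLast) := by
  have hne : (runsExtending h).Nonempty := ⟨ρ, hρ⟩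
  rw [commitStrategy, dif_pos hne, (canCommit_commitLength h).1 _ hne.some_mem ρ hρ]

end Strategy

section Play

variable {A B : NBA α} {σ : Fin k → Set α} {f : ARun A → ARun B}

lemma getD_getLast?_drop_hist_move (ρ : ARun B) {d n : ℕ} (h : d ≤ n) :
    (((hist ρ.move n).drop d).getLast?.map Prod.snd).getD (ρ.val.1 d) = ρ.val.1 n := by
  rcases h.eq_or_lt with rfl | hlt
  · rw [List.drop_eq_nil_of_le (by simp)]
    rfl
  · obtain ⟨n, rfl⟩ := Nat.exists_eq_add_one_of_ne_zero (Nat.ne_zero_of_lt hlt)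
    rw [hist_succ, List.drop_append_of_le_length (by simpa using Nat.le_of_lt_succ hlt)]
    simp [ARun.move]

variable (σ f) in
def commitPlay (s : ℕ → α × A.Q) : ℕ → Conf α A.Q B.Q k :=
  playConf σ (commitStrategy σ f) ⟨A.init, fun _ => [], B.init⟩ s

lemma commitLength_hist_zero (s : ℕ → α × A.Q) : commitLength σ f (hist s 0) = 0 :=
  Nat.findGreatest_zero

lemma monotone_commitLength_hist (s : ℕ → α × A.Q) :
    Monotone fun n => commitLength σ f (hist s n) :=
  monotone_nat_of_le_succ fun n => commitLength_mono (hist_prefix_hist s n.le_succ)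

lemma commitStrategy_hist_succ {s : ℕ → α × A.Q} {n : ℕ} {ρ : ARun A}
    (hρ : ρ ∈ runsExtending (hist s (n + 1))) :
    commitStrategy σ f (hist s (n + 1))
      = (hist (f ρ).move (commitLength σ f (hist s (n + 1)))).drop
          (commitLength σ f (hist s n)) := by
  rw [commitStrategy_eq hρ, hist_succ s n, List.dropLast_concat, ← hist_succ]

lemma filter_map_fst_commitStrategy {s : ℕ → α × A.Q} {n : ℕ} {ρ : ARun A}
    (hρ : ρ ∈ runsExtending (hist s (n + 1))) (i : Fin k) :
    (hist (f ρ).val.2 (commitLength σ f (hist s (n + 1)))).filter (· ∈ σ i)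
      = (hist (f ρ).val.2 (commitLength σ f (hist s n))).filter (· ∈ σ i)
        ++ ((commitStrategy σ f (hist s (n + 1))).map Prod.fst).filter (· ∈ σ i) := by
  rw [commitStrategy_hist_succ hρ, List.map_drop, map_fst_hist_move, ← List.filter_append,
    ← hist_eq_append_drop _ (monotone_commitLength_hist s n.le_succ)]

lemma filter_commitStrategy_prefix {s : ℕ → α × A.Q} {n : ℕ} {ρ : ARun A}
    (hρ : ρ ∈ runsExtending (hist s (n + 1)))
    (hbufs : ∀ i, ((hist s n).map Prod.fst).filter (· ∈ σ i)
      = (hist (f ρ).val.2 (commitLength σ f (hist s n))).filter (· ∈ σ i)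
        ++ (commitPlay σ f s n).bufs i) (i : Fin k) :
    ((commitStrategy σ f (hist s (n + 1))).map Prod.fst).filter (· ∈ σ i)
      <+: push σ (commitPlay σ f s n).bufs (s n).1 i := by
  have hc := (canCommit_commitLength (σ := σ) (f := f) (hist s (n + 1))).2 ρ hρ i
  rwa [filter_hist_succ_of_eq_append σ (hbufs i), filter_map_fst_commitStrategy hρ,
    List.prefix_append_right_inj] at hc

lemma commitPlay_spec (s : ℕ → α × A.Q) (n : ℕ) {ρ : ARun A}
    (hρ : ρ ∈ runsExtending (hist s n)) :
    (commitPlay σ f s n).q = (f ρ).val.1 (commitLength σ f (hist s n)) ∧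
    ∀ i, ((hist s n).map Prod.fst).filter (· ∈ σ i)
      = (hist (f ρ).val.2 (commitLength σ f (hist s n))).filter (· ∈ σ i)
        ++ (commitPlay σ f s n).bufs i := by
  induction n with
  | zero =>
    rw [commitLength_hist_zero]
    refine ⟨(f ρ).2.1.symm, fun i => by simp [hist, commitPlay, playConf]⟩
  | succ n ih =>
    obtain ⟨ihq, ihbufs⟩ := ih (runsExtending_anti (hist_prefix_hist s n.le_succ) hρ)
    refine ⟨?_, fun i => ?_⟩
    · show ((commitStrategy σ f (hist s (n + 1))).getLast?.map Prod.snd).getD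
        (commitPlay σ f s n).q = _
      rw [ihq, commitStrategy_hist_succ hρ,
        getD_getLast?_drop_hist_move _ (monotone_commitLength_hist s n.le_succ)]
    · obtain ⟨rest, hrest⟩ := filter_commitStrategy_prefix hρ ihbufs i
      show _ = _ ++ (commitStrategy σ f (hist s (n + 1))).foldl (fun bs m => pop σ bs m.1)
        (push σ (commitPlay σ f s n).bufs (s n).1) i
      rw [foldl_pop_apply, filter_hist_succ_of_eq_append σ (ihbufs i), ← hrest, List.drop_left,
        filter_map_fst_commitStrategy hρ, List.append_assoc]

lemma commitStrategy_hist_succ_eq_map {s : ℕ → α × A.Q} {n : ℕ} {ρ : ARun A}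
    (hρ : ρ ∈ runsExtending (hist s (n + 1))) :
    commitStrategy σ f (hist s (n + 1))
      = (List.range' (commitLength σ f (hist s n))
          (commitLength σ f (hist s (n + 1)) - commitLength σ f (hist s n))).map (f ρ).move := by
  rw [commitStrategy_hist_succ hρ, drop_hist]

lemma dupLegal_commitStrategy (s : ℕ → α × A.Q) (n : ℕ) :
    DupLegal σ B.δ (spApply σ (commitPlay σ f s n) (s n)) (resp (commitStrategy σ f) s n) := by
  by_cases hne : (runsExtending (hist s (n + 1))).Nonempty
  · obtain ⟨ρ, hρ⟩ := hne
    obtain ⟨hq, hbufs⟩ := commitPlay_spec (f := f) s n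
      (runsExtending_anti (hist_prefix_hist s n.le_succ) hρ)
    have hpre := filter_commitStrategy_prefix hρ hbufs
    rw [commitStrategy_hist_succ_eq_map hρ, List.map_map] at hpre
    rw [resp, commitStrategy_hist_succ_eq_map hρ, spApply, hq]
    exact dupLegal_range' σ (f ρ).2.2.1 _ _ _ _ hpre
  · rw [resp, commitStrategy, dif_neg hne]
    trivial

lemma exists_aRun_move_eq {θ : List (α × A.Q) → List (α × Q)} {c₀ : Conf α A.Q Q k}
    (hc₀ : c₀.p = A.init) {s : ℕ → α × A.Q} (hlegal : ∀ n, SpLegalAt σ A.δ θ c₀ s n)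
    (hacc : SpAccept A.F s) : ∃ ρ : ARun A, ρ.move = s := by
  let r : ℕ → A.Q := fun | 0 => A.init | n + 1 => (s n).2
  have hp : ∀ n, (playConf σ θ c₀ s n).p = r n := fun | 0 => hc₀ | _ + 1 => rfl
  have hinf : {n | r n ∈ A.F}.Infinite :=
    (hacc.image Nat.succ_injective.injOn).mono <| by
      rintro _ ⟨n, hn, rfl⟩
      exact hn
  refine ⟨⟨(r, fun n => (s n).1), rfl, fun n => ?_, hinf⟩, rfl⟩
  have := hlegal n
  rwa [SpLegalAt, SpLegal, hp] at this

lemma tendsto_commitLength (hf : ContinuousRF f) (htp : TracePres σ f) (ρ : ARun A) :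
    Tendsto (fun n => commitLength σ f (hist ρ.move n)) .atTop .atTop := by
  refine tendsto_atTop.2 fun d => ?_
  obtain ⟨N, hN⟩ := hf.exists_hist_move_eq ρ d
  have hletters : ∀ᶠ n in .atTop, ∀ i,
      (hist (f ρ).val.2 d).filter (· ∈ σ i) <+: (hist ρ.val.2 n).filter (· ∈ σ i) :=
    eventually_all.2 fun i => eventually_filter_hist_prefix (σ i) (htp ρ i) d
  filter_upwards [eventually_ge_atTop N, eventually_ge_atTop d, hletters]
    with n hNn hdn hn
  have hagree : ∀ ρ' ∈ runsExtending (hist ρ.move n), hist (f ρ').move d = hist (f ρ).move d :=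
    fun ρ' hρ' => hN ρ' (mem_runsExtending_hist.1
      (runsExtending_anti (hist_prefix_hist _ hNn) hρ'))
  refine Nat.le_findGreatest (by simpa using hdn) ⟨fun ρ₁ h₁ ρ₂ h₂ =>
    (hagree ρ₁ h₁).trans (hagree ρ₂ h₂).symm, fun ρ' hρ' i => ?_⟩
  rw [← map_fst_hist_move, hagree ρ' hρ', map_fst_hist_move, map_fst_hist_move]
  exact hn i

lemma dupAccept_commitStrategy (hf : ContinuousRF f) (htp : TracePres σ f) (ρ : ARun A) :
    DupAccept B.F (commitStrategy σ f) ρ.move := by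
  refine (infinite_setOf_block_hits (monotone_commitLength_hist _) (commitLength_hist_zero _)
    (tendsto_commitLength hf htp ρ) (f ρ).2.2.2).mono ?_
  rintro n ⟨t, h₁, h₂, ht⟩
  refine ⟨(f ρ).move t, ?_, ht⟩
  rw [resp, commitStrategy_hist_succ_eq_map (mem_runsExtending_hist.2 rfl)]
  exact List.mem_map_of_mem (List.mem_range'_1.2 ⟨h₁, by omega⟩)

lemma spOcc_eq_dupOcc (hcov : ∀ a : α, ∃ i, a ∈ σ i) (hf : ContinuousRF f)
    (htp : TracePres σ f) (ρ : ARun A) (a : α) :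
    spOcc ρ.move a = dupOcc (commitStrategy σ f) ρ.move a := by
  obtain ⟨i, hai⟩ := hcov a
  set D := fun n => commitLength σ f (hist ρ.move n)
  calc spOcc ρ.move a = {n | ρ.val.2 n = a}.encard := rfl
    _ = {n | (f ρ).val.2 n = a}.encard := encard_setOf_eq_of_proj_eq (σ i) (htp ρ i) hai
    _ = {x : ℕ × ℕ | x.2 < D (x.1 + 1) - D x.1 ∧ (f ρ).val.2 (D x.1 + x.2) = a}.encard :=
      (encard_blocks (monotone_commitLength_hist _) (commitLength_hist_zero _)
        (tendsto_commitLength hf htp ρ) _).symm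
    _ = dupOcc (commitStrategy σ f) ρ.move a := by
      congr 1
      ext ⟨n, j⟩
      simp only [Set.mem_ofPred_eq, resp]
      rw [commitStrategy_hist_succ_eq_map (mem_runsExtending_hist.2 rfl), List.getElem?_map]
      by_cases hj : j < D (n + 1) - D n
      · simp [hj, ARun.move, D]
      · rw [List.getElem?_eq_none (by simpa using not_lt.1 hj)]
        simp [hj]

end Play

theorem simu_of_exists_continuous_tracePres_general {α : Type} {k : ℕ}
    (σ : Fin k → Set α) (hcov : ∀ a : α, ∃ i, a ∈ σ i) (A B : NBA α)
    (f : ARun A → ARun B) (hf : ContinuousRF f) (htp : TracePres σ f) :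
    Simu σ (kapAllOmega k) A B := by
  refine ⟨commitStrategy σ f, fun s => ⟨fun n _ => ⟨dupLegal_commitStrategy s n, fun _ => le_top⟩,
    fun hlegal hacc => ?_⟩⟩
  obtain ⟨ρ, rfl⟩ := exists_aRun_move_eq rfl hlegal hacc
  exact ⟨dupAccept_commitStrategy hf htp ρ, spOcc_eq_dupOcc hcov hf htp ρ⟩

/-- **Lemma.** If there exists a continuous trace-preserving function
`f : ARun(A) → ARun(B)`, then `A ⊑^{κ_ω}_σ B` (Duplicator wins the multi-buffer
game with all buffers unbounded). -/
theorem simu_of_exists_continuous_tracePres {α : Type} [Fintype α] {k : ℕ}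
    (σ : Fin k → Set α) (hcov : ∀ a : α, ∃ i, a ∈ σ i) (A B : NBA α)
    (f : ARun A → ARun B) (hf : ContinuousRF f) (htp : TracePres σ f) :
    Simu σ (kapAllOmega k) A B :=
  simu_of_exists_continuous_tracePres_general σ hcov A B f hf htp

end MultiBuffer
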